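/- Let Σ ∈ ℝ^{2d×2d} be symmetric positive definite with block decomposition Σ = [[I, Σ_xy], [Σ_yx, Σ_yy]] into d×d blocks (i.e., Σ_xx = I), let θ*_x ∈ ℝ^d, and set S := Σ_yy − Σ_yx Σ_xy. For τ ≥ 0 define h(τ) := (τ/(1+τ)) · θ*_xᵀ Σ_xy ( Σ_yy + τI − Σ_yx Σ_xy/(1+τ) )^{-1} Σ_yx θ*_x. Then h(τ) ≥ 0 for all τ ≥ 0, and h is nondecreasing on the interval [0, √(λmin(S))]. In particular, since the deterministic equivalent of the spurious correlation satisfies C^Σ(λ) = h(τ(λ)) with τ(λ) increasing in λ, C^Σ(λ) is nonnegative and nondecreasing in λ on the set of λ where τ(λ) ≤ √(λmin(S)). -/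

import Mathlib

/-!
Multiplying the matrix inverted in `h(τ)` by `(1 + τ) / τ` writes `h(τ) = vᵀ N(τ)⁻¹ v` with
`N(τ) = ((1 + τ) / τ) S + (1 + τ) I + K`, where `K = Σ_yx Σ_xy` and `v = Σ_yx θ*_x`. Since the
Schur complement `S` is positive semidefinite, `N(τ)` is positive definite for `τ > 0`, whence
`h ≥ 0`. For `0 < τ₁ ≤ τ₂`, `N(τ₁) − N(τ₂) = ((τ₂ − τ₁) / (τ₁ τ₂)) (S − τ₁ τ₂ I)`, which is positive
semidefinite once `τ₁ τ₂ ≤ λmin(S)`. Inversion reverses the Loewner order, so `h(τ₁) ≤ h(τ₂)`.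
-/

open MeasureTheory ProbabilityTheory Matrix Real

noncomputable section

/-- Squared Euclidean norm of a vector. -/
def sqNorm {m : Type*} [Fintype m] (v : m → ℝ) : ℝ := ∑ i, v i ^ 2

/-- Smallest eigenvalue of a symmetric matrix, via the Rayleigh quotient. -/
def lmin {m : Type*} [Fintype m] (A : Matrix m m ℝ) : ℝ :=
  ⨅ v : {v : m → ℝ // sqNorm v = 1}, dotProduct v.1 (A.mulVec v.1)

lemma sqNorm_eq_dotProduct_self {n : Type*} [Fintype n] (v : n → ℝ) : sqNorm v = v ⬝ᵥ v := by
  simp [sqNorm, dotProduct, sq]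

namespace Matrix

variable {n : Type*} [Fintype n]

lemma IsHermitian.dotProduct_mulVec_comm {A : Matrix n n ℝ} (hA : A.IsHermitian) (v w : n → ℝ) :
    v ⬝ᵥ A *ᵥ w = w ⬝ᵥ A *ᵥ v := by
  rw [dotProduct_mulVec, ← mulVec_transpose, ← conjTranspose_eq_transpose_of_trivial, hA,
    dotProduct_comm]

lemma dotProduct_transpose_mul_mul_mulVec {m R : Type*} [Fintype m] [CommSemiring R]
    (A : Matrix n n R) (B : Matrix n m R) (x : m → R) :
    x ⬝ᵥ (Bᵀ * A * B) *ᵥ x = (B *ᵥ x) ⬝ᵥ A *ᵥ (B *ᵥ x) := by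
  rw [← mulVec_mulVec, ← mulVec_mulVec, dotProduct_mulVec, vecMul_transpose]

lemma mulVec_nonsing_inv_mulVec [DecidableEq n] {R : Type*} [CommRing R] {A : Matrix n n R}
    (hA : IsUnit A.det) (x : n → R) : A *ᵥ (A⁻¹ *ᵥ x) = x := by
  rw [mulVec_mulVec, mul_nonsing_inv _ hA, one_mulVec]

namespace PosSemidef

lemma lmin_mul_dotProduct_self_le {A : Matrix n n ℝ} (hA : A.PosSemidef) (x : n → ℝ) :
    lmin A * (x ⬝ᵥ x) ≤ x ⬝ᵥ A *ᵥ x := by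
  rcases eq_or_ne x 0 with rfl | hx
  · simp
  have hxx : 0 < x ⬝ᵥ x :=
    lt_of_le_of_ne (dotProduct_self_star_nonneg x) (Ne.symm (dotProduct_self_eq_zero.not.mpr hx))
  set r := √(x ⬝ᵥ x)
  have hr : 0 < r := Real.sqrt_pos.mpr hxx
  have hr2 : r ^ 2 = x ⬝ᵥ x := Real.sq_sqrt hxx.le
  have hunit : sqNorm (r⁻¹ • x) = 1 := by
    rw [sqNorm_eq_dotProduct_self, smul_dotProduct, dotProduct_smul, smul_eq_mul, smul_eq_mul,
      ← hr2]
    field_simp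
  have hbdd : BddBelow (Set.range fun v : {v : n → ℝ // sqNorm v = 1} => v.1 ⬝ᵥ A *ᵥ v.1) :=
    ⟨0, by rintro _ ⟨v, rfl⟩; simpa using hA.dotProduct_mulVec_nonneg v.1⟩
  have hle : lmin A ≤ (r⁻¹ • x) ⬝ᵥ A *ᵥ (r⁻¹ • x) := ciInf_le hbdd ⟨r⁻¹ • x, hunit⟩
  rw [mulVec_smul, smul_dotProduct, dotProduct_smul, smul_eq_mul, smul_eq_mul] at hle
  rw [← hr2]
  calc lmin A * r ^ 2 ≤ r⁻¹ * (r⁻¹ * (x ⬝ᵥ A *ᵥ x)) * r ^ 2 := by gcongr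
    _ = x ⬝ᵥ A *ᵥ x := by field_simp

lemma sub_smul_one_of_le_lmin [DecidableEq n] {A : Matrix n n ℝ} (hA : A.PosSemidef) {t : ℝ}
    (ht : t ≤ lmin A) : (A - t • 1).PosSemidef := by
  have hsymm : (A - t • 1).IsHermitian :=
    hA.isHermitian.sub (isHermitian_one.smul (IsSelfAdjoint.all t))
  refine .of_dotProduct_mulVec_nonneg hsymm fun x => ?_
  rw [star_trivial, sub_mulVec, dotProduct_sub, smul_mulVec, one_mulVec, dotProduct_smul,
    smul_eq_mul, sub_nonneg]
  exact (mul_le_mul_of_nonneg_right ht (dotProduct_self_star_nonneg x)).trans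
    (hA.lmin_mul_dotProduct_self_le x)

end PosSemidef

namespace PosDef

variable [DecidableEq n]

/-- Completing the square: the left side is maximal at `y = A⁻¹ x`. -/
lemma two_mul_dotProduct_sub_le_dotProduct_inv_mulVec {A : Matrix n n ℝ} (hA : A.PosDef)
    (x y : n → ℝ) : 2 * (x ⬝ᵥ y) - y ⬝ᵥ A *ᵥ y ≤ x ⬝ᵥ A⁻¹ *ᵥ x := by
  set c := A⁻¹ *ᵥ x
  have hAc : A *ᵥ c = x := mulVec_nonsing_inv_mulVec ((isUnit_iff_isUnit_det A).mp hA.isUnit) x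
  have hcAy : c ⬝ᵥ A *ᵥ y = x ⬝ᵥ y := by
    rw [hA.isHermitian.dotProduct_mulVec_comm, hAc, dotProduct_comm]
  have hsq := hA.posSemidef.dotProduct_mulVec_nonneg (y - c)
  rw [star_trivial, mulVec_sub, hAc, dotProduct_sub, sub_dotProduct, sub_dotProduct, hcAy,
    dotProduct_comm y x, dotProduct_comm c x] at hsq
  linarith

lemma dotProduct_inv_mulVec_le_of_posSemidef_sub {A B : Matrix n n ℝ} (hA : A.PosDef)
    (hAB : (B - A).PosSemidef) (x : n → ℝ) : x ⬝ᵥ B⁻¹ *ᵥ x ≤ x ⬝ᵥ A⁻¹ *ᵥ x := by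
  have hB : B.PosDef := by simpa using hA.add_posSemidef hAB
  set y := B⁻¹ *ᵥ x
  have hyBy : y ⬝ᵥ B *ᵥ y = x ⬝ᵥ y := by 
    rw [mulVec_nonsing_inv_mulVec ((isUnit_iff_isUnit_det B).mp hB.isUnit), dotProduct_comm]
  have hgap : y ⬝ᵥ A *ᵥ y ≤ y ⬝ᵥ B *ᵥ y := by
    simpa [sub_mulVec, dotProduct_sub] using hAB.dotProduct_mulVec_nonneg y
  calc x ⬝ᵥ B⁻¹ *ᵥ x = 2 * (x ⬝ᵥ y) - y ⬝ᵥ B *ᵥ y := by rw [hyBy]; ring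
    _ ≤ 2 * (x ⬝ᵥ y) - y ⬝ᵥ A *ᵥ y := by linarith
    _ ≤ x ⬝ᵥ A⁻¹ *ᵥ x := hA.two_mul_dotProduct_sub_le_dotProduct_inv_mulVec x y

end PosDef

end Matrix

section SpuriousCorrelation

variable {n : Type*} [DecidableEq n] {S K : Matrix n n ℝ}

/-- The paper's `h(τ)`, written with the Schur complement `S`, `K = Σ_yx Σ_xy` and
`v = Σ_yx θ*_x`, so that `Σ_yy = S + K`. -/
def spuriousCorrelation [Fintype n] (S K : Matrix n n ℝ) (v : n → ℝ) (τ : ℝ) : ℝ :=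
  (τ / (1 + τ)) * (v ⬝ᵥ (S + K + τ • 1 - (1 + τ)⁻¹ • K)⁻¹ *ᵥ v)

def rescaledResolvent (S K : Matrix n n ℝ) (τ : ℝ) : Matrix n n ℝ :=
  ((1 + τ) / τ) • S + (1 + τ) • 1 + K

lemma rescaledResolvent_eq_smul {τ : ℝ} (hτ : 0 < τ) :
    rescaledResolvent S K τ = ((1 + τ) / τ) • (S + K + τ • 1 - (1 + τ)⁻¹ • K) := by
  simp only [rescaledResolvent]
  match_scalars <;> field_simp
  ring

lemma rescaledResolvent_sub_rescaledResolvent {τ₁ τ₂ : ℝ} (h₁ : τ₁ ≠ 0) (h₂ : τ₂ ≠ 0) :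
    rescaledResolvent S K τ₁ - rescaledResolvent S K τ₂ =
      ((τ₂ - τ₁) / (τ₁ * τ₂)) • (S - (τ₁ * τ₂) • 1) := by
  simp only [rescaledResolvent]
  match_scalars <;> field_simp <;> ring

lemma posDef_rescaledResolvent [Fintype n] (hS : S.PosSemidef) (hK : K.PosSemidef) {τ : ℝ}
    (hτ : 0 < τ) : (rescaledResolvent S K τ).PosDef :=
  (PosDef.posSemidef_add (hS.smul (by positivity)) (PosDef.one.smul (by positivity))).add_posSemidef
    hK

lemma spuriousCorrelation_zero [Fintype n] (S K : Matrix n n ℝ) (v : n → ℝ) :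
    spuriousCorrelation S K v 0 = 0 := by
  simp [spuriousCorrelation]

lemma spuriousCorrelation_eq [Fintype n] (hS : S.PosSemidef) (hK : K.PosSemidef) (v : n → ℝ)
    {τ : ℝ} (hτ : 0 < τ) : spuriousCorrelation S K v τ = v ⬝ᵥ (rescaledResolvent S K τ)⁻¹ *ᵥ v := by
  have hM : (S + K + τ • 1 - (1 + τ)⁻¹ • K).PosDef := by
    have := (posDef_rescaledResolvent hS hK hτ).smul (a := τ / (1 + τ)) (by positivity)
    rwa [rescaledResolvent_eq_smul hτ, smul_smul, div_mul_div_cancel₀ (by positivity),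
      div_self hτ.ne', one_smul] at this
  have : Invertible ((1 + τ) / τ) := invertibleOfNonzero (by positivity)
  rw [rescaledResolvent_eq_smul hτ, spuriousCorrelation,
    Matrix.inv_smul _ _ ((isUnit_iff_isUnit_det _).mp hM.isUnit), invOf_eq_inv, inv_div,
    smul_mulVec, dotProduct_smul, smul_eq_mul]

lemma spuriousCorrelation_nonneg [Fintype n] (hS : S.PosSemidef) (hK : K.PosSemidef) (v : n → ℝ)
    {τ : ℝ} (hτ : 0 ≤ τ) : 0 ≤ spuriousCorrelation S K v τ := by
  rcases hτ.eq_or_lt with rfl | hτ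
  · rw [spuriousCorrelation_zero]
  rw [spuriousCorrelation_eq hS hK v hτ]
  simpa using (posDef_rescaledResolvent hS hK hτ).inv.posSemidef.dotProduct_mulVec_nonneg v

lemma monotoneOn_spuriousCorrelation [Fintype n] (hS : S.PosSemidef) (hK : K.PosSemidef)
    (v : n → ℝ) :
    MonotoneOn (spuriousCorrelation S K v) (Set.Icc 0 √(lmin S)) := by
  rintro τ₁ ⟨hτ₁, -⟩ τ₂ ⟨-, hτ₂⟩ h12
  rcases hτ₁.eq_or_lt with rfl | hpos₁
  · rw [spuriousCorrelation_zero]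
    exact spuriousCorrelation_nonneg hS hK v h12
  have hpos₂ := hpos₁.trans_le h12
  have hprod : τ₁ * τ₂ ≤ lmin S := by
    have := (Real.le_sqrt' hpos₂).mp hτ₂
    nlinarith
  rw [spuriousCorrelation_eq hS hK v hpos₁, spuriousCorrelation_eq hS hK v hpos₂]
  refine (posDef_rescaledResolvent hS hK hpos₂).dotProduct_inv_mulVec_le_of_posSemidef_sub ?_ v
  rw [rescaledResolvent_sub_rescaledResolvent hpos₁.ne' hpos₂.ne']
  exact (hS.sub_smul_one_of_le_lmin hprod).smul (div_nonneg (sub_nonneg.mpr h12) (by positivity))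

end SpuriousCorrelation

/-- For `Σ` positive definite with `Σ_xx = I` and Schur complement
`S = Σ_yy − Σ_yx Σ_xy`, the function
`h(τ) = (τ/(1+τ)) θ*_xᵀ Σ_xy (Σ_yy + τI − Σ_yx Σ_xy/(1+τ))⁻¹ Σ_yx θ*_x`
is nonnegative on `[0, ∞)` and nondecreasing on `[0, √(λmin(S))]`. -/
theorem deterministic_spurious_correlation_nonneg_and_monotone
    (d : ℕ) (Sxy Syx Syy : Matrix (Fin d) (Fin d) ℝ)
    (hpd : (Matrix.fromBlocks (1 : Matrix (Fin d) (Fin d) ℝ) Sxy Syx Syy).PosDef)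
    (θx : Fin d → ℝ)
    (S : Matrix (Fin d) (Fin d) ℝ) (hS : S = Syy - Syx * Sxy)
    (h : ℝ → ℝ)
    (hh : ∀ τ : ℝ, h τ =
      (τ / (1 + τ)) *
        dotProduct θx
          ((Sxy * (Syy + τ • 1 - (1 + τ)⁻¹ • (Syx * Sxy))⁻¹ * Syx).mulVec θx)) :
    (∀ τ : ℝ, 0 ≤ τ → 0 ≤ h τ) ∧
      MonotoneOn h (Set.Icc 0 (Real.sqrt (lmin S))) := by
  obtain ⟨-, hSyx, -, -⟩ := isHermitian_fromBlocks_iff.mp hpd.isHermitian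
  have hSpsd : S.PosSemidef := by
    have : Invertible (1 : Matrix (Fin d) (Fin d) ℝ) := invertibleOne
    have := (PosDef.fromBlocks₁₁ Sxy Syy PosDef.one).mp (hSyx ▸ hpd.posSemidef)
    rwa [inv_one, mul_one, hSyx, ← hS] at this
  have hK : (Syx * Sxy).PosSemidef := hSyx ▸ posSemidef_conjTranspose_mul_self Sxy
  have hSxy : Syxᵀ = Sxy := by
    rw [← hSyx, conjTranspose_eq_transpose_of_trivial, transpose_transpose]
  have hh' : h = spuriousCorrelation S (Syx * Sxy) (Syx *ᵥ θx) := by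
    funext τ
    rw [hh, spuriousCorrelation, ← dotProduct_transpose_mul_mul_mulVec, hSxy, hS, sub_add_cancel]
  subst hh'
  exact ⟨fun τ => spuriousCorrelation_nonneg hSpsd hK _, monotoneOn_spuriousCorrelation hSpsd hK _⟩

end
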